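/- Assume b_II > 0. Then for every fixed real N_E, the function N_I ↦ I2(N_E, N_I) is strictly increasing and strictly convex on ℝ, and I2(N_E, N_I) → ∞ as N_I → ∞. -/

import Mathlib

open MeasureTheory

/-- The stationary firing-rate functional `I2` of the inhibitory population. -/
noncomputable def I2 (VR VF aI bEE bEI bII νext : ℝ) (NE NI : ℝ) : ℝ :=
  ∫ s in Set.Ioi (0:ℝ),
    Real.exp (-s ^ 2 / 2) / s *
      (Real.exp (s * ((VF - (bEI * NE - bII * NI + (bEI - bEE) * νext)) / Real.sqrt aI)) -
       Real.exp (s * ((VR - (bEI * NE - bII * NI + (bEI - bEE) * νext)) / Real.sqrt aI)))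

open MeasureTheory Real Set

noncomputable def Gw (A B : ℝ) (s : ℝ) : ℝ :=
  Real.exp (-s ^ 2 / 2) / s * (Real.exp (s * A) - Real.exp (s * B))

lemma exp_sub_le' {x y : ℝ} (h : y ≤ x) : Real.exp x - Real.exp y ≤ (x - y) * Real.exp x := by
  have h1 : Real.exp x * (1 + (y - x)) ≤ Real.exp x * Real.exp (y - x) := by
    have := Real.add_one_le_exp (y - x)
    nlinarith [Real.exp_pos x]
  have h2 : Real.exp x * Real.exp (y - x) = Real.exp y := by
    rw [← Real.exp_add]; ring_nf
  nlinarith [Real.exp_pos x]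

lemma Gw_pos {A B : ℝ} (hAB : B < A) {s : ℝ} (hs : 0 < s) : 0 < Gw A B s := by
  apply mul_pos (div_pos (Real.exp_pos _) hs)
  have : s * B < s * A := by nlinarith
  linarith [Real.exp_lt_exp.2 this]

lemma integrable_Gw {A B : ℝ} (hAB : B < A) (c : ℝ) :
    IntegrableOn (fun s => Gw A B s * Real.exp (s * c)) (Set.Ioi 0) := by
  have hmeas : AEStronglyMeasurable (fun s => Gw A B s * Real.exp (s * c))
      (volume.restrict (Set.Ioi (0:ℝ))) := by
    apply ContinuousOn.aestronglyMeasurable _ measurableSet_Ioi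
    apply ContinuousOn.mul _ (Continuous.continuousOn (by continuity))
    unfold Gw
    apply ContinuousOn.mul
    · exact ContinuousOn.div (Continuous.continuousOn (by continuity))
        continuousOn_id (fun s hs => ne_of_gt hs)
    · exact Continuous.continuousOn (by continuity)
  set m := A + c with hm
  have hbd : Integrable (fun s => (A - B) * Real.exp (m ^ 2 / 2) *
      Real.exp (-(1/2) * (s - m) ^ 2)) := by
    exact ((integrable_exp_neg_mul_sq (by norm_num : (0:ℝ) < 1/2)).comp_sub_right m).const_mul _
  apply Integrable.mono hbd.integrableOn hmeas
  filter_upwards [ae_restrict_mem measurableSet_Ioi] with s hs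
  have hs0 : (0:ℝ) < s := hs
  have hle : s * B ≤ s * A := by nlinarith
  have h1 : 0 ≤ Gw A B s * Real.exp (s * c) :=
    le_of_lt (mul_pos (Gw_pos hAB hs0) (Real.exp_pos _))
  rw [Real.norm_eq_abs, Real.norm_eq_abs, abs_of_nonneg h1]
  have h2 : Gw A B s * Real.exp (s * c) ≤ (A - B) * Real.exp (-s^2/2 + s * m) := by
    have h3 : Real.exp (s*A) - Real.exp (s*B) ≤ s * (A - B) * Real.exp (s*A) := by
      have := exp_sub_le' hle
      calc Real.exp (s*A) - Real.exp (s*B) ≤ (s*A - s*B) * Real.exp (s*A) := this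
        _ = s * (A - B) * Real.exp (s*A) := by ring
    have h4 : Gw A B s ≤ (A - B) * Real.exp (-s^2/2 + s*A) := by
      unfold Gw
      rw [div_mul_eq_mul_div, div_le_iff₀ hs0, Real.exp_add]
      calc Real.exp (-s^2/2) * (Real.exp (s*A) - Real.exp (s*B))
          ≤ Real.exp (-s^2/2) * (s * (A - B) * Real.exp (s*A)) := by
            apply mul_le_mul_of_nonneg_left h3 (le_of_lt (Real.exp_pos _))
        _ = (A - B) * (Real.exp (-s^2/2) * Real.exp (s*A)) * s := by ring
    calc Gw A B s * Real.exp (s * c) ≤ ((A - B) * Real.exp (-s^2/2 + s*A)) * Real.exp (s * c) := by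
          apply mul_le_mul_of_nonneg_right h4 (le_of_lt (Real.exp_pos _))
      _ = (A - B) * (Real.exp (-s^2/2 + s*A) * Real.exp (s*c)) := by ring
      _ = (A - B) * Real.exp (-s^2/2 + s * m) := by rw [← Real.exp_add, hm]; ring_nf
  have h5 : (A - B) * Real.exp (-s^2/2 + s * m)
      = (A - B) * Real.exp (m ^ 2 / 2) * Real.exp (-(1/2) * (s - m) ^ 2) := by
    rw [mul_assoc, ← Real.exp_add]; ring_nf
  rw [h5] at h2
  exact h2.trans (le_abs_self _)

lemma pos_setIntegral {f : ℝ → ℝ} (hint : IntegrableOn f (Set.Ioi 0))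
    (hpos : ∀ s ∈ Set.Ioi (0:ℝ), 0 < f s) : 0 < ∫ s in Set.Ioi (0:ℝ), f s := by
  rw [setIntegral_pos_iff_support_of_nonneg_ae _ hint]
  · have hsub : Set.Ioi (0:ℝ) ⊆ Function.support f ∩ Set.Ioi 0 :=
      fun s hs => ⟨ne_of_gt (hpos s hs), hs⟩
    calc (0:ENNReal) < volume (Set.Ioi (0:ℝ)) := by simp
      _ ≤ volume (Function.support f ∩ Set.Ioi 0) := measure_mono hsub
  · filter_upwards [ae_restrict_mem measurableSet_Ioi] with s hs
    exact le_of_lt (hpos s hs)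

lemma strictMono_J {A B d : ℝ} (hAB : B < A) (hd : 0 < d) :
    StrictMono (fun y => ∫ s in Set.Ioi (0:ℝ), Gw A B s * Real.exp (s * (d * y))) := by
  intro x y hxy
  have h1 := integrable_Gw hAB (d * x)
  have h2 := integrable_Gw hAB (d * y)
  have h1' : IntegrableOn (fun s => Gw A B s * Real.exp (s * (d * x))) (Set.Ioi 0) := by
    simpa [mul_comm, mul_assoc, mul_left_comm] using h1
  have h2' : IntegrableOn (fun s => Gw A B s * Real.exp (s * (d * y))) (Set.Ioi 0) := by
    simpa [mul_comm, mul_assoc, mul_left_comm] using h2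
  have key : 0 < ∫ s in Set.Ioi (0:ℝ),
      (Gw A B s * Real.exp (s * (d * y)) - Gw A B s * Real.exp (s * (d * x))) := by
    have hsub : IntegrableOn (fun s => Gw A B s * Real.exp (s * (d * y)) -
        Gw A B s * Real.exp (s * (d * x))) (Set.Ioi 0) := h2'.sub h1'
    apply pos_setIntegral hsub
    intro s hs
    have hs0 : (0:ℝ) < s := hs
    have : s * (d * x) < s * (d * y) := by
      nlinarith [mul_pos (mul_pos hs0 hd) (sub_pos.2 hxy)]
    have := Real.exp_lt_exp.2 this
    nlinarith [Gw_pos hAB hs0]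
  rw [integral_sub h2' h1'] at key
  linarith

lemma strictConvex_J {A B d : ℝ} (hAB : B < A) (hd : 0 < d) :
    StrictConvexOn ℝ Set.univ
      (fun y => ∫ s in Set.Ioi (0:ℝ), Gw A B s * Real.exp (s * (d * y))) := by
  refine ⟨convex_univ, ?_⟩
  intro x _ y _ hxy a b ha hb hab
  have h1' : IntegrableOn (fun s => Gw A B s * Real.exp (s * (d * x))) (Set.Ioi 0) :=
    integrable_Gw hAB (d * x)
  have h2' : IntegrableOn (fun s => Gw A B s * Real.exp (s * (d * y))) (Set.Ioi 0) :=
    integrable_Gw hAB (d * y)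
  have h3' : IntegrableOn (fun s => Gw A B s * Real.exp (s * (d * (a * x + b * y))))
      (Set.Ioi 0) := integrable_Gw hAB (d * (a * x + b * y))
  have hsum : IntegrableOn (fun s => a * (Gw A B s * Real.exp (s * (d * x))) +
      b * (Gw A B s * Real.exp (s * (d * y)))) (Set.Ioi 0) :=
    (h1'.const_mul a).add (h2'.const_mul b)
  have hdiff : IntegrableOn (fun s => (a * (Gw A B s * Real.exp (s * (d * x))) +
      b * (Gw A B s * Real.exp (s * (d * y)))) -
      Gw A B s * Real.exp (s * (d * (a * x + b * y)))) (Set.Ioi 0) := hsum.sub h3'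
  have key : 0 < ∫ s in Set.Ioi (0:ℝ), ((a * (Gw A B s * Real.exp (s * (d * x))) +
      b * (Gw A B s * Real.exp (s * (d * y)))) -
      Gw A B s * Real.exp (s * (d * (a * x + b * y)))) := by
    apply pos_setIntegral hdiff
    intro s hs
    have hs0 : (0:ℝ) < s := hs
    have hne : s * (d * x) ≠ s * (d * y) := by
      have hsd : s * d ≠ 0 := ne_of_gt (mul_pos hs0 hd)
      intro h
      exact hxy (mul_left_cancel₀ hsd (by rw [mul_assoc, mul_assoc]; exact h))
    have hconv := strictConvexOn_exp.2 (Set.mem_univ (s * (d * x))) (Set.mem_univ (s * (d * y)))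
      hne ha hb hab
    have heq : a • (s * (d * x)) + b • (s * (d * y)) = s * (d * (a * x + b * y)) := by
      simp only [smul_eq_mul]; ring
    rw [heq] at hconv
    simp only [smul_eq_mul] at hconv
    nlinarith [Gw_pos hAB hs0]
  rw [integral_sub hsum h3', integral_add (h1'.const_mul a) (h2'.const_mul b),
    integral_const_mul, integral_const_mul] at key
  simp only [smul_eq_mul]
  linarith

lemma tendsto_J {A B d : ℝ} (hAB : B < A) (hd : 0 < d) :
    Filter.Tendsto (fun y => ∫ s in Set.Ioi (0:ℝ), Gw A B s * Real.exp (s * (d * y)))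
      Filter.atTop Filter.atTop := by
  have hG : IntegrableOn (Gw A B) (Set.Ioi 0) := by
    have := integrable_Gw hAB 0
    simpa using this
  have hG12 : IntegrableOn (Gw A B) (Set.Ioc 1 2) :=
    hG.mono_set (fun s hs => lt_of_lt_of_le one_pos hs.1.le)
  have hJpos : 0 < ∫ s in Set.Ioc (1:ℝ) 2, Gw A B s := by
    rw [setIntegral_pos_iff_support_of_nonneg_ae _ hG12]
    · have hsub : Set.Ioc (1:ℝ) 2 ⊆ Function.support (Gw A B) ∩ Set.Ioc 1 2 :=
        fun s hs => ⟨ne_of_gt (Gw_pos hAB (lt_of_lt_of_le one_pos hs.1.le)), hs⟩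
      calc (0:ENNReal) < volume (Set.Ioc (1:ℝ) 2) := by simp
        _ ≤ volume (Function.support (Gw A B) ∩ Set.Ioc 1 2) := measure_mono hsub
    · filter_upwards [ae_restrict_mem measurableSet_Ioc] with s hs
      exact le_of_lt (Gw_pos hAB (lt_of_lt_of_le one_pos hs.1.le))
  set J := ∫ s in Set.Ioc (1:ℝ) 2, Gw A B s with hJ
  have hlow : ∀ y : ℝ, 0 ≤ y →
      J * Real.exp (d * y) ≤ ∫ s in Set.Ioi (0:ℝ), Gw A B s * Real.exp (s * (d * y)) := by
    intro y hy
    have hint : IntegrableOn (fun s => Gw A B s * Real.exp (s * (d * y))) (Set.Ioi 0) :=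
      integrable_Gw hAB (d * y)
    have hint12 : IntegrableOn (fun s => Gw A B s * Real.exp (s * (d * y))) (Set.Ioc 1 2) :=
      hint.mono_set (fun s hs => lt_of_lt_of_le one_pos hs.1.le)
    have step1 : ∫ s in Set.Ioc (1:ℝ) 2, Gw A B s * Real.exp (d * y)
        ≤ ∫ s in Set.Ioc (1:ℝ) 2, Gw A B s * Real.exp (s * (d * y)) := by
      apply setIntegral_mono_on (hG12.mul_const _) hint12 measurableSet_Ioc
      intro s hs
      have hs1 : (1:ℝ) ≤ s := hs.1.le
      have : d * y ≤ s * (d * y) := by nlinarith [mul_nonneg hd.le hy]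
      exact mul_le_mul_of_nonneg_left (Real.exp_le_exp.2 this)
        (Gw_pos hAB (lt_of_lt_of_le one_pos hs.1.le)).le
    have step2 : ∫ s in Set.Ioc (1:ℝ) 2, Gw A B s * Real.exp (s * (d * y))
        ≤ ∫ s in Set.Ioi (0:ℝ), Gw A B s * Real.exp (s * (d * y)) := by
      apply setIntegral_mono_set hint
      · filter_upwards [ae_restrict_mem measurableSet_Ioi] with s hs
        exact (mul_pos (Gw_pos hAB hs) (Real.exp_pos _)).le
      · exact Filter.Eventually.of_forall (fun s hs => lt_of_lt_of_le one_pos hs.1.le)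
    have step0 : ∫ s in Set.Ioc (1:ℝ) 2, Gw A B s * Real.exp (d * y)
        = J * Real.exp (d * y) := by
      rw [integral_mul_const]
    linarith
  have htend : Filter.Tendsto (fun y => J * Real.exp (d * y)) Filter.atTop Filter.atTop := by
    apply Filter.Tendsto.const_mul_atTop hJpos
    exact Real.tendsto_exp_atTop.comp (Filter.Tendsto.const_mul_atTop hd Filter.tendsto_id)
  refine Filter.tendsto_atTop_mono' _ ?_ htend
  filter_upwards [Filter.eventually_ge_atTop 0] with y hy
  exact hlow y hy

/-- For `b_II > 0` and each fixed `N_E`, the map `N_I ↦ I2(N_E, N_I)` is strictly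
increasing, strictly convex on `ℝ`, and tends to `∞` as `N_I → ∞`. -/
theorem I2_strictMono_strictConvex_tendsto (VR VF aI bEE bEI bII νext : ℝ)
    (hV : VR < VF) (haI : 0 < aI)
    (hEE : 0 ≤ bEE) (hEI : 0 ≤ bEI) (hII : 0 < bII) (hν : 0 ≤ νext) (NE : ℝ) :
    StrictMono (fun y => I2 VR VF aI bEE bEI bII νext NE y) ∧
    StrictConvexOn ℝ Set.univ (fun y => I2 VR VF aI bEE bEI bII νext NE y) ∧
    Filter.Tendsto (fun y => I2 VR VF aI bEE bEI bII νext NE y)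
      Filter.atTop Filter.atTop := by
  set r := Real.sqrt aI with hrdef
  have hr : 0 < r := Real.sqrt_pos.mpr haI
  set A := (VF - (bEI * NE + (bEI - bEE) * νext)) / r with hA
  set B := (VR - (bEI * NE + (bEI - bEE) * νext)) / r with hB
  set d := bII / r with hd'
  have hAB : B < A := by
    rw [hA, hB]
    apply div_lt_div_of_pos_right _ hr
    · linarith
  have hd : 0 < d := div_pos hII hr
  have heq : (fun y => I2 VR VF aI bEE bEI bII νext NE y)
      = fun y => ∫ s in Set.Ioi (0:ℝ), Gw A B s * Real.exp (s * (d * y)) := by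
    funext y
    unfold I2
    congr 1
    funext s
    have e1 : (VF - (bEI * NE - bII * y + (bEI - bEE) * νext)) / r = A + d * y := by
      rw [hA, hd']; field_simp; ring
    have e2 : (VR - (bEI * NE - bII * y + (bEI - bEE) * νext)) / r = B + d * y := by
      rw [hB, hd']; field_simp; ring
    rw [← hrdef, e1, e2]
    have e3 : s * (A + d * y) = s * A + s * (d * y) := by ring
    have e4 : s * (B + d * y) = s * B + s * (d * y) := by ring
    rw [e3, e4, Real.exp_add, Real.exp_add]
    unfold Gw
    ring
  rw [heq]
  exact ⟨strictMono_J hAB hd, strictConvex_J hAB hd, tendsto_J hAB hd⟩
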